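/- Let α ≥ 1, β ≥ 1 and N ≥ 2 be integers, and in ℂ[[x_1,x_2,y_1,y_2]] let I_Δ be the ideal generated by x_1 − y_1, x_1^α x_2^β − y_1^α y_2^β and x_2^N − y_2^N. Then for every integer k ≥ 1 such that N does not divide k, the element x_2^k − y_2^k is NOT integral over I_Δ. -/

import Mathlib

/-!
Substituting the arc `t ↦ (t^(k+1), t, t^(k+2), θ t)`, with `θ` a primitive `N`-th root of
unity, sends `I_Δ` into `(t^(k+1))` and `x_2^k - y_2^k` to `(1 - θ^k) t^k` with `1 - θ^k ≠ 0`.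
Integral dependence survives ring homomorphisms, but an element of exact order `k` cannot be
integral over an ideal of order `≥ k + 1`: in degree `k m` the equation reduces to
`(1 - θ^k)^m = 0`.
-/

def IsIntegralOverIdeal {R : Type*} [CommRing R] (I : Ideal R) (f : R) : Prop :=
  ∃ m : ℕ, 0 < m ∧ ∃ a : ℕ → R, (∀ j, 1 ≤ j → j ≤ m → a j ∈ I ^ j) ∧
    f ^ m + ∑ j ∈ Finset.Icc 1 m, a j * f ^ (m - j) = 0

namespace IsIntegralOverIdeal

variable {R S F : Type*} [CommRing R] [CommRing S] {I J : Ideal R} {f : R}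

theorem mono (h : IsIntegralOverIdeal I f) (hIJ : I ≤ J) : IsIntegralOverIdeal J f := by
  obtain ⟨m, hm, a, ha, heq⟩ := h
  exact ⟨m, hm, a, fun j hj hjm => Ideal.pow_right_mono hIJ j (ha j hj hjm), heq⟩

theorem map [FunLike F R S] [RingHomClass F R S] (h : IsIntegralOverIdeal I f) (φ : F) :
    IsIntegralOverIdeal (I.map φ) (φ f) := by
  obtain ⟨m, hm, a, ha, heq⟩ := h
  refine ⟨m, hm, φ ∘ a, fun j hj hjm => ?_, ?_⟩
  · rw [← Ideal.map_pow]
    exact Ideal.mem_map_of_mem φ (ha j hj hjm)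
  · simpa using congrArg φ heq

end IsIntegralOverIdeal

namespace PowerSeries

variable {R : Type*} [CommRing R]

theorem not_isIntegralOverIdeal_C_mul_X_pow {c : R} (hc : ¬IsNilpotent c) {k : ℕ}
    {I : Ideal R⟦X⟧} (hI : I ≤ Ideal.span {X ^ (k + 1)}) :
    ¬IsIntegralOverIdeal I (C c * X ^ k) := by
  intro h
  obtain ⟨m, hm, a, ha, heq⟩ := h.mono hI
  have hterm : ∀ j ∈ Finset.Icc 1 m, coeff (k * m) (a j * (C c * X ^ k) ^ (m - j)) = 0 := by
    intro j hj
    obtain ⟨hj1, hjm⟩ := Finset.mem_Icc.mp hj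
    have haj : X ^ ((k + 1) * j) ∣ a j := by
      simpa [Ideal.span_singleton_pow, Ideal.mem_span_singleton, ← pow_mul] using ha j hj1 hjm
    have hdvd : (X : R⟦X⟧) ^ ((k + 1) * j + k * (m - j)) ∣ a j * (C c * X ^ k) ^ (m - j) := by
      rw [pow_add, mul_pow, ← pow_mul]
      exact mul_dvd_mul haj (dvd_mul_left _ _)
    refine X_pow_dvd_iff.mp hdvd _ ?_
    have : k * (m - j) + k * j = k * m := by rw [← Nat.mul_add, Nat.sub_add_cancel hjm]
    nlinarith
  have hcoeff := congrArg (coeff (k * m)) heq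
  rw [map_add, map_sum, Finset.sum_eq_zero hterm, add_zero, mul_pow, ← map_pow, ← pow_mul,
    coeff_C_mul_X_pow, if_pos rfl, map_zero] at hcoeff
  exact hc ⟨m, hcoeff⟩

end PowerSeries

section Arc

open PowerSeries

variable {R : Type*} [CommRing R] (k : ℕ) (θ : R)

noncomputable def arc : Fin 4 → R⟦X⟧ :=
  ![X ^ (k + 1), X, X ^ (k + 2), C θ * X]

theorem hasSubst_arc : MvPowerSeries.HasSubst (arc k θ) :=
  MvPowerSeries.hasSubst_of_constantCoeff_zero fun i => by
    change constantCoeff (arc k θ i) = 0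
    fin_cases i <;> simp [arc]

noncomputable abbrev substArc : MvPowerSeries (Fin 4) R →ₐ[R] R⟦X⟧ :=
  MvPowerSeries.substAlgHom (hasSubst_arc k θ)

theorem substArc_X (i : Fin 4) : substArc k θ (MvPowerSeries.X i) = arc k θ i :=
  MvPowerSeries.substAlgHom_X _ i

theorem substArc_X_one_pow_sub_X_three_pow :
    substArc k θ (MvPowerSeries.X 1 ^ k - MvPowerSeries.X 3 ^ k) = C (1 - θ ^ k) * X ^ k := by
  simp only [map_sub, map_pow, substArc_X, arc]
  simp [mul_pow, sub_mul]

theorem map_substArc_le {α N : ℕ} (hα : 1 ≤ α) (β : ℕ) (hθ : θ ^ N = 1) :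
    (Ideal.span {MvPowerSeries.X 0 - MvPowerSeries.X 2,
      MvPowerSeries.X 0 ^ α * MvPowerSeries.X 1 ^ β -
        MvPowerSeries.X 2 ^ α * MvPowerSeries.X 3 ^ β,
      MvPowerSeries.X 1 ^ N - MvPowerSeries.X 3 ^ N}).map (substArc k θ) ≤
      Ideal.span {(X : R⟦X⟧) ^ (k + 1)} := by
  rw [Ideal.map_span, Ideal.span_le]
  rintro _ ⟨g, hg, rfl⟩
  simp only [Set.mem_insert_iff, Set.mem_singleton_iff] at hg
  rw [SetLike.mem_coe, Ideal.mem_span_singleton]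
  rcases hg with rfl | rfl | rfl <;>
    simp only [map_sub, map_mul, map_pow, substArc_X, arc, Matrix.cons_val]
  · exact dvd_sub dvd_rfl (pow_dvd_pow X (by omega))
  · exact dvd_sub (dvd_mul_of_dvd_left (dvd_pow_self _ (by omega)) _)
      (dvd_mul_of_dvd_left (dvd_pow (pow_dvd_pow X (by omega)) (by omega)) _)
  · rw [mul_pow, ← map_pow, hθ, map_one, one_mul, sub_self]
    exact dvd_zero _

end Arc

open MvPowerSeries in
theorem pure_power_not_integral_general (α β N : ℕ)
    (hα : 1 ≤ α) (hN : 2 ≤ N)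
    (IΔ : Ideal (MvPowerSeries (Fin 4) ℂ))
    (hIΔ : IΔ = Ideal.span {X 0 - X 2, X 0 ^ α * X 1 ^ β - X 2 ^ α * X 3 ^ β,
      X 1 ^ N - X 3 ^ N}) :
    ∀ k : ℕ, 1 ≤ k → ¬ N ∣ k →
      ¬ IsIntegralOverIdeal IΔ (X 1 ^ k - X 3 ^ k) := by
  intro k _ hNk hint
  obtain ⟨θ, hθ⟩ : ∃ θ : ℂ, IsPrimitiveRoot θ N := ⟨_, Complex.isPrimitiveRoot_exp N (by omega)⟩
  have hθk : ¬IsNilpotent (1 - θ ^ k) := by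
    rw [isNilpotent_iff_eq_zero, sub_eq_zero, eq_comm, hθ.pow_eq_one_iff_dvd]
    exact hNk
  refine PowerSeries.not_isIntegralOverIdeal_C_mul_X_pow hθk
    (map_substArc_le k θ hα β hθ.pow_eq_one) ?_
  rw [← substArc_X_one_pow_sub_X_three_pow, ← hIΔ]
  exact hint.map _

open MvPowerSeries in
/-- In `ℂ[[x_1,x_2,y_1,y_2]]` (variables `x_1 = X 0`, `x_2 = X 1`, `y_1 = X 2`, `y_2 = X 3`)
with `I_Δ = ⟨x_1 - y_1, x_1^α x_2^β - y_1^α y_2^β, x_2^N - y_2^N⟩`, for every `k ≥ 1` not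
divisible by `N` the element `x_2^k - y_2^k` is not integral over `I_Δ`. -/
theorem pure_power_not_integral (α β N : ℕ)
    (hα : 1 ≤ α) (hβ : 1 ≤ β) (hN : 2 ≤ N)
    (IΔ : Ideal (MvPowerSeries (Fin 4) ℂ))
    (hIΔ : IΔ = Ideal.span {X 0 - X 2, X 0 ^ α * X 1 ^ β - X 2 ^ α * X 3 ^ β,
      X 1 ^ N - X 3 ^ N}) :
    ∀ k : ℕ, 1 ≤ k → ¬ N ∣ k →
      ¬ IsIntegralOverIdeal IΔ (X 1 ^ k - X 3 ^ k) :=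
  pure_power_not_integral_general α β N hα hN IΔ hIΔ
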